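/- For every a > 0, ∫₀^∞ ( J₀(ar) − cos r ) / r dr = ln(2/a), the integral understood as lim_{ε→0, N→∞} ∫_ε^N. -/

import Mathlib

open Filter Set Topology

/-- The Bessel function of the first kind of order zero,
`J₀(t) = ∑_{k≥0} (−1)^k (t/2)^{2k} / (k!)²`. -/
noncomputable def J0 (t : ℝ) : ℝ :=
  ∑' k : ℕ, (-1) ^ k / ((Nat.factorial k : ℝ) ^ 2) * (t / 2) ^ (2 * k)

open MeasureTheory Real Nat Function
open scoped Interval

/-!
Poisson's formula `J₀(t) = π⁻¹ ∫₀^π cos (t sin θ) dθ` (integrate the cosine series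
termwise against Wallis' integrals) writes `∫_ε^N (J₀(ar) − cos r)/r dr` as the average over
`θ ∈ (0, π)` of the Frullani-type integrals `∫_ε^N (cos (br) − cos r)/r dr`, `b = a sin θ`.
Substituting `u = br`, such an integral equals `∫_{bε}^ε cos u/u du + ∫_N^{bN} cos u/u du`,
which tends to `−log b` and is bounded by `2 |log b|` uniformly in `ε, N`. Dominated
convergence and `∫₀^π log (sin θ) dθ = −π log 2` then give `log 2 − log a`.
-/

lemma prod_range_two_mul_add_one_div (k : ℕ) :
    ∏ i ∈ Finset.range k, (2 * (i : ℝ) + 1) / (2 * i + 2) =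
      (2 * k)! / (4 ^ k * (k ! : ℝ) ^ 2) := by
  induction k with
  | zero => simp
  | succ k ih =>
    rw [Finset.prod_range_succ, ih, show 2 * (k + 1) = 2 * k + 1 + 1 by ring]
    simp only [factorial_succ]
    push_cast
    field_simp
    ring

theorem J0_eq_integral (t : ℝ) : J0 t = π⁻¹ * ∫ θ in 0..π, cos (t * sin θ) := by
  have hterm (k : ℕ) : ∫ θ in 0..π, (-1) ^ k * (t * sin θ) ^ (2 * k) / ((2 * k)! : ℝ) =
      π * ((-1) ^ k / (k ! : ℝ) ^ 2 * (t / 2) ^ (2 * k)) := by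
    have hfactor : (fun θ => (-1) ^ k * (t * sin θ) ^ (2 * k) / ((2 * k)! : ℝ)) =
        fun θ => (-1) ^ k * t ^ (2 * k) / ((2 * k)! : ℝ) * sin θ ^ (2 * k) := by
      funext θ; ring
    have hpow : (t / 2) ^ (2 * k) = t ^ (2 * k) / 4 ^ k := by
      rw [div_pow, pow_mul (2 : ℝ)]; norm_num
    rw [hfactor, intervalIntegral.integral_const_mul, integral_sin_pow_even,
      prod_range_two_mul_add_one_div, hpow]
    field_simp
  have hsumm : Summable fun k : ℕ => |t| ^ (2 * k) / ((2 * k)! : ℝ) :=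
    (summable_pow_div_factorial |t|).comp_injective (mul_right_injective₀ two_ne_zero)
  have hsum : HasSum
      (fun k : ℕ => ∫ θ in 0..π, (-1) ^ k * (t * sin θ) ^ (2 * k) / ((2 * k)! : ℝ))
      (∫ θ in 0..π, cos (t * sin θ)) := by
    refine intervalIntegral.hasSum_integral_of_dominated_convergence
      (fun k _ => |t| ^ (2 * k) / ((2 * k)! : ℝ))
      (fun k => (by fun_prop : Continuous fun θ : ℝ =>
        (-1) ^ k * (t * sin θ) ^ (2 * k) / ((2 * k)! : ℝ)).aestronglyMeasurable)
      (fun k => ae_of_all _ fun θ _ => ?_)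
      (ae_of_all _ fun _ _ => hsumm)
      intervalIntegrable_const (ae_of_all _ fun θ _ => hasSum_cos _)
    have hsin : |t| * |sin θ| ≤ |t| := mul_le_of_le_one_right (abs_nonneg t) (abs_sin_le_one θ)
    simp only [norm_div, norm_mul, norm_pow, norm_neg, norm_one, one_pow, one_mul, norm_eq_abs,
      Nat.abs_cast]
    gcongr
  simp_rw [hterm] at hsum
  rw [J0, ← (hsum.mul_left π⁻¹).tsum_eq]
  simp [pi_ne_zero]

lemma pos_of_mem_uIcc {c d u : ℝ} (hc : 0 < c) (hd : 0 < d) (hu : u ∈ uIcc c d) : 0 < u :=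
  (lt_min hc hd).trans_le hu.1

lemma intervalIntegrable_div_self {g : ℝ → ℝ} (hg : Continuous g) {c d : ℝ} (hc : 0 < c)
    (hd : 0 < d) : IntervalIntegrable (fun u => g u / u) volume c d :=
  (hg.continuousOn.div continuousOn_id fun _ hu =>
    (pos_of_mem_uIcc hc hd hu).ne').intervalIntegrable

lemma integral_comp_mul_left_div_self (g : ℝ → ℝ) {b : ℝ} (hb : b ≠ 0) (x y : ℝ) :
    ∫ r in x..y, g (b * r) / r = ∫ u in b * x..b * y, g u / u := by
  have h : (fun r => g (b * r) / r) = fun r => b * (g (b * r) / (b * r)) := by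
    funext r
    rcases eq_or_ne r 0 with rfl | hr
    · simp
    · field_simp
  rw [h, intervalIntegral.integral_const_mul,
    intervalIntegral.integral_comp_mul_left (fun u => g u / u) hb, smul_eq_mul,
    mul_inv_cancel_left₀ hb]

lemma abs_integral_cos_div_le_abs_log {c d : ℝ} (hc : 0 < c) (hd : 0 < d) :
    |∫ u in c..d, cos u / u| ≤ |log (d / c)| := by
  rw [← integral_one_div_of_pos hc hd, ← norm_eq_abs]
  refine intervalIntegral.norm_integral_le_abs_of_norm_le ?_
    (intervalIntegrable_div_self continuous_const hc hd)
  filter_upwards [ae_restrict_mem measurableSet_uIoc] with u hu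
  have hu0 := pos_of_mem_uIcc hc hd (uIoc_subset_uIcc hu)
  rw [norm_div, norm_eq_abs, norm_of_nonneg hu0.le]
  gcongr
  exact abs_cos_le_one u

lemma abs_integral_cos_div_le_two_div {c d : ℝ} (hc : 0 < c) (hcd : c ≤ d) :
    |∫ u in c..d, cos u / u| ≤ 2 / c := by
  have hd := hc.trans_le hcd
  have hne : ∀ x ∈ uIcc c d, x ≠ 0 := fun x hx => (pos_of_mem_uIcc hc hd hx).ne'
  have hinv : ∀ x ∈ uIcc c d, HasDerivAt (fun y : ℝ => y⁻¹) (-(x ^ 2)⁻¹) x :=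
    fun x hx => hasDerivAt_inv (hne x hx)
  have hsq : IntervalIntegrable (fun x : ℝ => (x ^ 2)⁻¹) volume c d :=
    (ContinuousOn.inv₀ (by fun_prop) fun x hx => pow_ne_zero 2 (hne x hx)).intervalIntegrable
  have hparts : ∫ u in c..d, cos u / u =
      d⁻¹ * sin d - c⁻¹ * sin c - ∫ x in c..d, -(x ^ 2)⁻¹ * sin x := by
    simp_rw [div_eq_inv_mul]
    exact intervalIntegral.integral_mul_deriv_eq_deriv_mul hinv (fun x _ => hasDerivAt_sin x)
      hsq.neg (continuous_cos.intervalIntegrable _ _)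
  have hsq_eq : ∫ x in c..d, (x ^ 2)⁻¹ = c⁻¹ - d⁻¹ := by
    rw [← neg_sub, ← intervalIntegral.integral_eq_sub_of_hasDerivAt hinv hsq.neg,
      intervalIntegral.integral_neg, neg_neg]
  have hrem : |∫ x in c..d, -(x ^ 2)⁻¹ * sin x| ≤ c⁻¹ - d⁻¹ := by
    rw [← norm_eq_abs, ← abs_of_nonneg (sub_nonneg.2 (inv_anti₀ hc hcd)), ← hsq_eq]
    refine intervalIntegral.norm_integral_le_abs_of_norm_le (ae_of_all _ fun x => ?_) hsq
    rw [norm_mul, norm_neg, norm_inv, norm_pow, norm_eq_abs, sq_abs]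
    exact mul_le_of_le_one_right (by positivity) (abs_sin_le_one x)
  have hend : ∀ x, 0 < x → |x⁻¹ * sin x| ≤ x⁻¹ := fun x hx => by
    rw [abs_mul, abs_inv, abs_of_pos hx]
    exact mul_le_of_le_one_right (by positivity) (abs_sin_le_one x)
  rw [hparts]
  calc _ ≤ |d⁻¹ * sin d| + |c⁻¹ * sin c| + |∫ x in c..d, -(x ^ 2)⁻¹ * sin x| :=
        (abs_sub _ _).trans (add_le_add_left (abs_sub _ _) _)
    _ ≤ d⁻¹ + c⁻¹ + (c⁻¹ - d⁻¹) := by gcongr <;> exact hend _ ‹_›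
    _ = 2 / c := by ring

lemma integral_cos_mul_sub_cos_div {b ε N : ℝ} (hb : 0 < b) (hε : 0 < ε) (hN : 0 < N) :
    ∫ r in ε..N, (cos (b * r) - cos r) / r =
      (∫ u in b * ε..ε, cos u / u) + ∫ u in N..b * N, cos u / u := by
  have hbε : 0 < b * ε := mul_pos hb hε
  have hbN : 0 < b * N := mul_pos hb hN
  have hint {x y : ℝ} (hx : 0 < x) (hy : 0 < y) :
      IntervalIntegrable (fun u => cos u / u) volume x y :=
    intervalIntegrable_div_self continuous_cos hx hy
  simp_rw [sub_div]
  rw [intervalIntegral.integral_sub (intervalIntegrable_div_self (by fun_prop) hε hN)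
      (hint hε hN), integral_comp_mul_left_div_self cos hb.ne',
    ← intervalIntegral.integral_add_adjacent_intervals (hint hbε hε) (hint hε hbN),
    ← intervalIntegral.integral_add_adjacent_intervals (hint hε hN) (hint hN hbN)]
  ring

lemma abs_integral_cos_mul_sub_cos_div_le {b ε N : ℝ} (hb : 0 < b) (hε : 0 < ε) (hN : 0 < N) :
    |∫ r in ε..N, (cos (b * r) - cos r) / r| ≤ 2 * |log b| := by
  rw [integral_cos_mul_sub_cos_div hb hε hN]
  have h₁ := abs_integral_cos_div_le_abs_log (mul_pos hb hε) hε
  have h₂ := abs_integral_cos_div_le_abs_log hN (mul_pos hb hN)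
  rw [div_mul_cancel_right₀ hε.ne', log_inv, abs_neg] at h₁
  rw [mul_div_cancel_right₀ _ hN.ne'] at h₂
  linarith [abs_add_le (∫ u in b * ε..ε, cos u / u) (∫ u in N..b * N, cos u / u)]

lemma tendsto_integral_cos_div_mul_self_nhdsGT {b : ℝ} (hb : 0 < b) :
    Tendsto (fun ε => ∫ u in b * ε..ε, cos u / u) (𝓝[>] 0) (𝓝 (-log b)) := by
  have hsplit : ∀ ε > 0, ∫ u in b * ε..ε, cos u / u =
      (∫ u in b * ε..ε, (cos u - 1) / u) + -log b := fun ε hε => by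
    have hbε : 0 < b * ε := mul_pos hb hε
    rw [← log_inv, ← div_mul_cancel_right₀ hε.ne' b, ← integral_one_div_of_pos hbε hε,
      ← intervalIntegral.integral_add (intervalIntegrable_div_self (by fun_prop) hbε hε)
        (intervalIntegrable_div_self continuous_const hbε hε)]
    simp_rw [← add_div, sub_add_cancel]
  have hrem : Tendsto (fun ε => ∫ u in b * ε..ε, (cos u - 1) / u) (𝓝[>] 0) (𝓝 0) := by
    refine squeeze_zero_norm' (a := fun ε => |1 - b| * ε) ?_ ?_
    · filter_upwards [self_mem_nhdsWithin] with ε (hε : 0 < ε)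
      have h := intervalIntegral.norm_integral_le_of_norm_le_const (a := b * ε) (b := ε)
        (C := 1) (f := fun u => (cos u - 1) / u) fun u hu => by
          have hu0 := pos_of_mem_uIcc (mul_pos hb hε) hε (uIoc_subset_uIcc hu)
          rw [norm_div, norm_eq_abs, norm_eq_abs, abs_of_pos hu0, div_le_one hu0]
          simpa [abs_of_pos hu0] using abs_cos_sub_cos_le u 0
      rwa [one_mul, ← one_sub_mul, abs_mul, abs_of_pos hε] at h
    · simpa using ((continuous_const_mul |1 - b|).tendsto 0).mono_left nhdsWithin_le_nhds
  have h := hrem.add_const (-log b)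
  rw [zero_add] at h
  refine h.congr' ?_
  filter_upwards [self_mem_nhdsWithin] with ε hε using (hsplit ε hε).symm

lemma tendsto_integral_cos_div_self_mul_atTop {b : ℝ} (hb : 0 < b) :
    Tendsto (fun N => ∫ u in N..b * N, cos u / u) atTop (𝓝 0) := by
  refine squeeze_zero_norm' (a := fun N => 2 / (min 1 b * N)) ?_
    (tendsto_const_nhds.div_atTop (tendsto_id.const_mul_atTop (lt_min one_pos hb)))
  filter_upwards [eventually_gt_atTop 0] with N hN
  rw [norm_eq_abs]
  rcases le_total 1 b with h | h
  · rw [min_eq_left h, one_mul]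
    exact abs_integral_cos_div_le_two_div hN (le_mul_of_one_le_left hN.le h)
  · rw [min_eq_right h, intervalIntegral.integral_symm, abs_neg]
    exact abs_integral_cos_div_le_two_div (mul_pos hb hN) (mul_le_of_le_one_left hN.le h)

lemma eventually_pos_prod_nhdsGT_atTop :
    ∀ᶠ p : ℝ × ℝ in 𝓝[>] 0 ×ˢ atTop, 0 < p.1 ∧ 0 < p.2 :=
  Eventually.prod_mk (self_mem_nhdsWithin (a := 0) (s := Ioi 0)) (eventually_gt_atTop 0)

theorem tendsto_integral_cos_mul_sub_cos_div {b : ℝ} (hb : 0 < b) :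
    Tendsto (fun p : ℝ × ℝ => ∫ r in p.1..p.2, (cos (b * r) - cos r) / r)
      (𝓝[>] 0 ×ˢ atTop) (𝓝 (-log b)) := by
  have h := ((tendsto_integral_cos_div_mul_self_nhdsGT hb).comp tendsto_fst).add
    ((tendsto_integral_cos_div_self_mul_atTop hb).comp tendsto_snd)
  rw [add_zero] at h
  refine h.congr' ?_
  filter_upwards [eventually_pos_prod_nhdsGT_atTop] with p hp
  exact (integral_cos_mul_sub_cos_div hb hp.1 hp.2).symm

lemma J0_mul_sub_cos_div_eq_integral (a r : ℝ) :
    (J0 (a * r) - cos r) / r = π⁻¹ * ∫ θ in 0..π, (cos (a * sin θ * r) - cos r) / r := by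
  have hcomm (θ : ℝ) : a * r * sin θ = a * sin θ * r := mul_right_comm a r (sin θ)
  rw [J0_eq_integral, intervalIntegral.integral_div,
    intervalIntegral.integral_sub
      ((by fun_prop : Continuous fun θ => cos (a * sin θ * r)).intervalIntegrable _ _)
      intervalIntegrable_const,
    intervalIntegral.integral_const, smul_eq_mul, sub_zero]
  simp_rw [hcomm]
  rw [mul_div_assoc', mul_sub, inv_mul_cancel_left₀ pi_ne_zero]

lemma integral_J0_mul_sub_cos_div_eq {a ε N : ℝ} (hε : 0 < ε) (hN : 0 < N) :
    ∫ r in ε..N, (J0 (a * r) - cos r) / r =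
      π⁻¹ * ∫ θ in 0..π, ∫ r in ε..N, (cos (a * sin θ * r) - cos r) / r := by
  simp_rw [J0_mul_sub_cos_div_eq_integral]
  rw [intervalIntegral.integral_const_mul, intervalIntegral_intervalIntegral_swap]
  have hcont : ContinuousOn (uncurry fun r θ => (cos (a * sin θ * r) - cos r) / r)
      (uIcc ε N ×ˢ uIcc 0 π) :=
    ContinuousOn.div (by fun_prop) (by fun_prop) fun x hx => (pos_of_mem_uIcc hε hN hx.1).ne'
  exact (hcont.integrableOn_compact (isCompact_uIcc.prod isCompact_uIcc)).mono_set
    (prod_mono uIoc_subset_uIcc uIoc_subset_uIcc)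

theorem tendsto_integral_integral_cos_mul_sin_sub_cos_div {a : ℝ} (ha : 0 < a) :
    Tendsto (fun p : ℝ × ℝ => ∫ θ in 0..π, ∫ r in p.1..p.2, (cos (a * sin θ * r) - cos r) / r)
      (𝓝[>] 0 ×ˢ atTop) (𝓝 (∫ θ in 0..π, (-log a - log (sin θ)))) := by
  have hsin : ∀ᵐ θ, θ ∈ Ι 0 π → 0 < sin θ := by
    filter_upwards [compl_mem_ae_iff.2 (measure_singleton π)] with θ (hθπ : θ ≠ π) hθ
    rw [uIoc_of_le pi_pos.le] at hθ
    exact sin_pos_of_pos_of_lt_pi hθ.1 (hθ.2.lt_of_ne hθπ)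
  refine intervalIntegral.tendsto_integral_filter_of_dominated_convergence
    (fun θ => 2 * (|log a| + |log (sin θ)|)) (Eventually.of_forall fun p => ?_) ?_
    ((intervalIntegrable_const.add
      (intervalIntegrable_log_sin (a := 0) (b := π)).abs).const_mul 2) ?_
  · have hf : StronglyMeasurable (uncurry fun θ r => (cos (a * sin θ * r) - cos r) / r) :=
      (by fun_prop : Measurable _).stronglyMeasurable
    simp_rw [intervalIntegral.intervalIntegral_eq_integral_uIoc]
    exact (hf.integral_prod_right (ν := volume.restrict (Ι p.1 p.2))).aestronglyMeasurable
      |>.const_smul (if p.1 ≤ p.2 then (1 : ℝ) else -1)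
  · filter_upwards [eventually_pos_prod_nhdsGT_atTop] with p hp
    filter_upwards [hsin] with θ hθ hmem
    refine (abs_integral_cos_mul_sub_cos_div_le (mul_pos ha (hθ hmem)) hp.1 hp.2).trans ?_
    rw [log_mul ha.ne' (hθ hmem).ne']
    gcongr
    exact abs_add_le _ _
  · filter_upwards [hsin] with θ hθ hmem
    have h := tendsto_integral_cos_mul_sub_cos_div (mul_pos ha (hθ hmem))
    rwa [log_mul ha.ne' (hθ hmem).ne', neg_add'] at h

lemma integral_neg_log_sub_log_sin {a : ℝ} (ha : 0 < a) :
    ∫ θ in 0..π, (-log a - log (sin θ)) = π * log (2 / a) := by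
  have hlog : IntervalIntegrable (fun θ => log (sin θ)) volume 0 π := intervalIntegrable_log_sin
  rw [intervalIntegral.integral_sub intervalIntegrable_const hlog,
    intervalIntegral.integral_const, integral_log_sin_zero_pi, smul_eq_mul,
    log_div two_ne_zero ha.ne']
  ring

/-- For every `a > 0`, `∫₀^∞ (J₀(ar) − cos r)/r dr = ln(2/a)`, the integral
understood as `lim_{ε→0⁺, N→∞} ∫_ε^N`. -/
theorem integral_J0_sub_cos (a : ℝ) (ha : 0 < a) :
    Tendsto (fun p : ℝ × ℝ => ∫ r in p.1..p.2, (J0 (a * r) - Real.cos r) / r)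
      ((nhdsWithin 0 (Ioi 0)) ×ˢ atTop) (𝓝 (Real.log (2 / a))) := by
  have h := (tendsto_integral_integral_cos_mul_sin_sub_cos_div ha).const_mul π⁻¹
  rw [integral_neg_log_sub_log_sin ha, inv_mul_cancel_left₀ pi_ne_zero] at h
  refine h.congr' ?_
  filter_upwards [eventually_pos_prod_nhdsGT_atTop] with p hp
  exact (integral_J0_mul_sub_cos_div_eq hp.1 hp.2).symm
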